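/- Let S, T, U be modules in a family of orthogonal points with endomorphism rings k, S ≇ T, and Ext^1_R(S,U) ≠ 0, Ext^1_R(T,U) ≠ 0. Then there exists an indecomposable left R-module M of length 3 which is not uniserial: M has two distinct submodules of length 2. -/

import Mathlib

open CategoryTheory

variable (k R : Type) [Field k] [Ring R] [Algebra k R]

/-- For a `k`-algebra `R`, the category of `R`-modules is `k`-linear: scalars act on
hom-groups through the algebra map `k → R`, which is central. -/
noncomputable instance ModuleCat.algLinear : Linear k (ModuleCat.{0} R) where
  homModule M N :=
    letI : Module k N := Module.compHom N (algebraMap k R)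
    haveI : SMulCommClass R k N := ⟨fun r c n => by
      show r • (algebraMap k R c • n) = algebraMap k R c • r • n
      rw [smul_smul, smul_smul, Algebra.commutes]⟩
    ModuleCat.Hom.instModule
  smul_comp := by intros X Y Z c f g; ext x; exact map_smul g.hom _ _
  comp_smul := by intros; ext; rfl

/-- `Ext¹_R(M, N)`, as a `k`-vector space, for `R` a `k`-algebra. -/
noncomputable def ext1 (M N : ModuleCat.{0} R) : ModuleCat k :=
  ((Ext k (ModuleCat.{0} R) 1).obj (Opposite.op M)).obj N

variable {k R}

/-- `0 → T → E → S → 0` is a short exact sequence: `E` is an extension of `S` by `T`. -/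
def IsExtension {T E S : ModuleCat.{0} R} (ι : T ⟶ E) (π : E ⟶ S) : Prop :=
  Function.Injective ι ∧ Function.Surjective π ∧ LinearMap.range ι.hom = LinearMap.ker π.hom

/-- The extension `0 → T → E → S → 0` is split. -/
def IsSplit {T E S : ModuleCat.{0} R} (_ι : T ⟶ E) (π : E ⟶ S) : Prop :=
  ∃ σ : S ⟶ E, σ ≫ π = 𝟙 S

/-- Every endomorphism of `M` is a scalar: `End_R(M) ≅ k`. -/
def EndIsScalar (k : Type) [Field k] {R : Type} [Ring R] [Algebra k R]
    (M : ModuleCat.{0} R) : Prop :=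
  ∀ f : M ⟶ M, ∃ c : k, f = c • 𝟙 M

/-- `M` has composition length `n`. -/
def HasLength {R : Type} [Ring R] (M : ModuleCat.{0} R) (n : ℕ) : Prop :=
  ∃ s : CompositionSeries (Submodule R M), s.head = ⊥ ∧ s.last = ⊤ ∧ s.length = n

/-- `M` is indecomposable: nonzero, and not a direct sum of two nonzero submodules. -/
def IsIndecomposable {R : Type} [Ring R] (M : ModuleCat.{0} R) : Prop :=
  Nontrivial M ∧ ¬ ∃ N N' : Submodule R M, N ≠ ⊥ ∧ N' ≠ ⊥ ∧ IsCompl N N'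

/-- The lattice of submodules of `M` is a chain. -/
def IsUniserialModule {R : Type} [Ring R] (M : ModuleCat.{0} R) : Prop :=
  ∀ N N' : Submodule R M, N ≤ N' ∨ N' ≤ N

/-!
Nonzero classes in `Ext¹(S, U)` and `Ext¹(T, U)` give nonsplit extensions `0 → U → E → S → 0` and
`0 → U → F → T → 0`; take `M` to be their pushout along `U`. Inside `M`, `E` and `F` are two
maximal submodules meeting in the simple submodule `U`, which gives the composition series
`0 < U < E < M` and two incomparable submodules of length 2. A nonsplit extension of a simple
module is essential over `U`, so a submodule of `M` missing `U` misses both `E` and `F`; it then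
embeds in both `S` and `T` and must vanish since `S ≇ T`. Hence `U` lies in every nonzero
submodule of `M`, and `M` is indecomposable.
-/

section Pushout

variable {A B C D : Type*} [AddCommGroup A] [AddCommGroup B] [AddCommGroup C] [AddCommGroup D]
  [Module R A] [Module R B] [Module R C] [Module R D]

abbrev Pushout (f : A →ₗ[R] B) (g : A →ₗ[R] C) : Type _ :=
  (B × C) ⧸ LinearMap.range (f.prod (-g))

namespace Pushout

variable (f : A →ₗ[R] B) (g : A →ₗ[R] C)

def inl : B →ₗ[R] Pushout f g :=
  (LinearMap.range (f.prod (-g))).mkQ ∘ₗ LinearMap.inl R B C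

def inr : C →ₗ[R] Pushout f g :=
  (LinearMap.range (f.prod (-g))).mkQ ∘ₗ LinearMap.inr R B C

theorem mk_eq_inl_add_inr (b : B) (c : C) :
    (Submodule.Quotient.mk (b, c) : Pushout f g) = inl f g b + inr f g c := by
  simp [inl, inr, ← Submodule.Quotient.mk_add]

theorem inl_comp : inl f g ∘ₗ f = inr f g ∘ₗ g := by
  ext a
  simp only [inl, inr, LinearMap.coe_comp, Function.comp_apply, Submodule.mkQ_apply,
    LinearMap.inl_apply, LinearMap.inr_apply, Submodule.Quotient.eq]
  exact ⟨a, by simp⟩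

theorem range_inl_inf_range_inr :
    LinearMap.range (inl f g) ⊓ LinearMap.range (inr f g) = LinearMap.range (inl f g ∘ₗ f) := by
  refine le_antisymm ?_ ?_
  · rintro _ ⟨⟨b, rfl⟩, ⟨c, hc⟩⟩
    obtain ⟨a, ha⟩ := (Submodule.Quotient.eq _).1 hc
    have hfa : f a = 0 - b := congr_arg Prod.fst ha
    refine ⟨-a, ?_⟩
    rw [LinearMap.comp_apply, map_neg, hfa, zero_sub, neg_neg]
  · refine le_inf (LinearMap.range_comp_le_range _ _) ?_
    rw [inl_comp]
    exact LinearMap.range_comp_le_range _ _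

variable {f g}

def descLeft (π : B →ₗ[R] D) (hπ : π ∘ₗ f = 0) : Pushout f g →ₗ[R] D :=
  Submodule.liftQ _ (π ∘ₗ LinearMap.fst R B C) <| by
    rintro _ ⟨a, rfl⟩
    simpa using LinearMap.congr_fun hπ a

def descRight (π : C →ₗ[R] D) (hπ : π ∘ₗ g = 0) : Pushout f g →ₗ[R] D :=
  Submodule.liftQ _ (π ∘ₗ LinearMap.snd R B C) <| by
    rintro _ ⟨a, rfl⟩
    simpa using LinearMap.congr_fun hπ a

@[simp]
theorem descLeft_inl (π : B →ₗ[R] D) (hπ : π ∘ₗ f = 0) (b : B) :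
    descLeft π hπ (inl f g b) = π b := rfl

@[simp]
theorem descLeft_inr (π : B →ₗ[R] D) (hπ : π ∘ₗ f = 0) (c : C) :
    descLeft π hπ (inr f g c) = 0 := map_zero π

@[simp]
theorem descRight_inl (π : C →ₗ[R] D) (hπ : π ∘ₗ g = 0) (b : B) :
    descRight π hπ (inl f g b) = 0 := map_zero π

@[simp]
theorem descRight_inr (π : C →ₗ[R] D) (hπ : π ∘ₗ g = 0) (c : C) :
    descRight π hπ (inr f g c) = π c := rfl

theorem descLeft_comp_inl (π : B →ₗ[R] D) (hπ : π ∘ₗ f = 0) :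
    descLeft π hπ ∘ₗ inl f g = π := rfl

theorem descRight_comp_inr (π : C →ₗ[R] D) (hπ : π ∘ₗ g = 0) :
    descRight π hπ ∘ₗ inr f g = π := rfl

theorem descLeft_surjective {π : B →ₗ[R] D} (hπ : π ∘ₗ f = 0) (hs : Function.Surjective π) :
    Function.Surjective (descLeft (g := g) π hπ) :=
  Function.Surjective.of_comp (g := inl f g) hs

theorem descRight_surjective {π : C →ₗ[R] D} (hπ : π ∘ₗ g = 0) (hs : Function.Surjective π) :
    Function.Surjective (descRight (f := f) π hπ) :=
  Function.Surjective.of_comp (g := inr f g) hs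

theorem inl_injective (h : LinearMap.ker g ≤ LinearMap.ker f) : Function.Injective (inl f g) := by
  rw [← LinearMap.ker_eq_bot, eq_bot_iff]
  intro b hb
  obtain ⟨a, ha⟩ := (Submodule.Quotient.mk_eq_zero _).1 hb
  have hfa : f a = b := congr_arg Prod.fst ha
  have hga : -g a = 0 := congr_arg Prod.snd ha
  rw [Submodule.mem_bot, ← hfa]
  exact h (neg_eq_zero.1 hga)

theorem inr_injective (h : LinearMap.ker f ≤ LinearMap.ker g) : Function.Injective (inr f g) := by
  rw [← LinearMap.ker_eq_bot, eq_bot_iff]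
  intro c hc
  obtain ⟨a, ha⟩ := (Submodule.Quotient.mk_eq_zero _).1 hc
  have hfa : f a = 0 := congr_arg Prod.fst ha
  have hga : -g a = c := congr_arg Prod.snd ha
  rw [Submodule.mem_bot, ← hga, neg_eq_zero]
  exact h hfa

theorem inl_injective_of_injective (hg : Function.Injective g) : Function.Injective (inl f g) :=
  inl_injective (LinearMap.ker_eq_bot.2 hg ▸ bot_le)

theorem inr_injective_of_injective (hf : Function.Injective f) : Function.Injective (inr f g) :=
  inr_injective (LinearMap.ker_eq_bot.2 hf ▸ bot_le)

theorem exact_inl_descRight {π : C →ₗ[R] D} (hπ : Function.Exact g π) :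
    Function.Exact (inl f g) (descRight π hπ.linearMap_comp_eq_zero) := by
  refine LinearMap.exact_iff.2 (le_antisymm ?_ (LinearMap.range_le_ker_iff.2 (by ext; simp)))
  intro x hx
  obtain ⟨⟨b, c⟩, rfl⟩ := Submodule.Quotient.mk_surjective _ x
  rw [LinearMap.mem_ker, mk_eq_inl_add_inr, map_add, descRight_inl, descRight_inr, zero_add] at hx
  obtain ⟨a, rfl⟩ := (hπ c).1 hx
  refine ⟨b + f a, ?_⟩
  rw [mk_eq_inl_add_inr, map_add, ← LinearMap.comp_apply, inl_comp, LinearMap.comp_apply]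

theorem exact_inr_descLeft {π : B →ₗ[R] D} (hπ : Function.Exact f π) :
    Function.Exact (inr f g) (descLeft π hπ.linearMap_comp_eq_zero) := by
  refine LinearMap.exact_iff.2 (le_antisymm ?_ (LinearMap.range_le_ker_iff.2 (by ext; simp)))
  intro x hx
  obtain ⟨⟨b, c⟩, rfl⟩ := Submodule.Quotient.mk_surjective _ x
  rw [LinearMap.mem_ker, mk_eq_inl_add_inr, map_add, descLeft_inl, descLeft_inr, add_zero] at hx
  obtain ⟨a, rfl⟩ := (hπ b).1 hx
  refine ⟨g a + c, ?_⟩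
  rw [mk_eq_inl_add_inr, map_add, ← LinearMap.comp_apply, ← inl_comp, LinearMap.comp_apply]

theorem comp_inr_comp_eq_of_comp_inl_eq_id {r : Pushout f g →ₗ[R] B} (hr : r ∘ₗ inl f g = .id) :
    (r ∘ₗ inr f g) ∘ₗ g = f := by
  rw [LinearMap.comp_assoc, ← inl_comp, ← LinearMap.comp_assoc, hr, LinearMap.id_comp]

end Pushout

end Pushout

section Submodule

variable {M U S : Type*} [AddCommGroup M] [AddCommGroup U] [AddCommGroup S]
  [Module R M] [Module R U] [Module R S]

theorem isAtom_range_of_injective [IsSimpleModule R U] {f : U →ₗ[R] M}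
    (hf : Function.Injective f) : IsAtom (LinearMap.range f) :=
  isSimpleModule_iff_isAtom.1 (IsSimpleModule.congr (LinearEquiv.ofInjective f hf).symm)

theorem bijective_domRestrict_of_disjoint_ker [IsSimpleModule R S] {f : M →ₗ[R] S}
    {X : Submodule R M} (hX : X ≠ ⊥) (h : Disjoint X (LinearMap.ker f)) :
    Function.Bijective (f.domRestrict X) := by
  have hinj := LinearMap.injective_domRestrict_iff.2 h
  have : Nontrivial X := Submodule.nontrivial_iff_ne_bot.2 hX
  refine ⟨hinj, LinearMap.surjective_of_ne_zero fun h0 => ?_⟩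
  obtain ⟨x, hx⟩ := exists_ne (0 : X)
  exact hx (hinj (by rw [h0, LinearMap.zero_apply, map_zero]))

theorem disjoint_range_of_disjoint_map {E : Type*} [AddCommGroup E] [Module R E]
    {j : E →ₗ[R] M} (hj : Function.Injective j) {K : Submodule R E}
    (hK : ∀ Y : Submodule R E, Disjoint Y K → Y = ⊥) {X : Submodule R M}
    (hX : Disjoint X (K.map j)) : Disjoint X (LinearMap.range j) := by
  have hcomap : X.comap j = ⊥ := hK _ <| Submodule.disjoint_def.2 fun e he heK =>
    hj (by rw [map_zero]; exact Submodule.disjoint_def.1 hX _ he ⟨e, heK, rfl⟩)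
  refine Submodule.disjoint_def.2 ?_
  rintro _ hx ⟨e, rfl⟩
  have : e ∈ X.comap j := hx
  rw [hcomap, Submodule.mem_bot] at this
  rw [this, map_zero]

end Submodule

section Extension

variable {U E S : Type*} [AddCommGroup U] [AddCommGroup E] [AddCommGroup S]
  [Module R U] [Module R E] [Module R S]

structure IsNonsplitExtension (ι : U →ₗ[R] E) (π : E →ₗ[R] S) : Prop where
  injective : Function.Injective ι
  surjective : Function.Surjective π
  exact : Function.Exact ι π
  not_split : ¬ ∃ r : E →ₗ[R] U, r ∘ₗ ι = .id

theorem IsNonsplitExtension.eq_bot_of_disjoint_range [IsSimpleModule R S] {ι : U →ₗ[R] E}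
    {π : E →ₗ[R] S} (h : IsNonsplitExtension ι π) {X : Submodule R E}
    (hX : Disjoint X (LinearMap.range ι)) : X = ⊥ := by
  by_contra hne
  -- `X` maps isomorphically onto `S`, and the inverse is a section of `π`.
  rw [← LinearMap.exact_iff.1 h.exact] at hX
  let e := LinearEquiv.ofBijective _ (bijective_domRestrict_of_disjoint_ker hne hX)
  have hsection : π ∘ₗ (X.subtype ∘ₗ e.symm.toLinearMap) = .id := by
    ext s
    exact e.apply_symm_apply s
  have hsplit : (∃ σ, π ∘ₗ σ = .id) ↔ ∃ r, r ∘ₗ ι = .id :=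
    (h.exact.split_tfae h.injective h.surjective).out 0 1
  exact h.not_split (hsplit.1 ⟨_, hsection⟩)

end Extension

section Length

variable {M N : Type} [AddCommGroup M] [Module R M] [AddCommGroup N] [Module R N]

theorem hasLength_two {A : Submodule R M} (h₁ : ⊥ ⋖ A) (h₂ : A ⋖ ⊤) :
    HasLength (ModuleCat.of R M) 2 := by
  refine ⟨⟨2, ![⊥, A, ⊤], fun i => ?_⟩, ?_, ?_, rfl⟩
  · fin_cases i
    exacts [h₁, h₂]
  all_goals rfl

theorem hasLength_three {A B : Submodule R M} (h₁ : ⊥ ⋖ A) (h₂ : A ⋖ B) (h₃ : B ⋖ ⊤) :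
    HasLength (ModuleCat.of R M) 3 := by
  refine ⟨⟨3, ![⊥, A, B, ⊤], fun i => ?_⟩, ?_, ?_, rfl⟩
  · fin_cases i
    exacts [h₁, h₂, h₃]
  all_goals rfl

theorem hasLength_three_of_isCoatom {N N' : Submodule R M} (hNN' : IsAtom (N ⊓ N'))
    (hN : IsCoatom N) (hN' : IsCoatom N') (hne : N ≠ N') : HasLength (ModuleCat.of R M) 3 := by
  refine hasLength_three (bot_covBy_iff.2 hNN') ?_ (covBy_top_iff.2 hN)
  rw [inf_comm]
  apply inf_covBy_of_covBy_sup_left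
  rw [hN'.sup_eq_top_of_ne hN hne.symm]
  exact covBy_top_iff.2 hN'

theorem HasLength.of_linearEquiv (e : M ≃ₗ[R] N) {n : ℕ} (h : HasLength (ModuleCat.of R M) n) :
    HasLength (ModuleCat.of R N) n := by
  obtain ⟨s, hhead, hlast, hlen⟩ := h
  let φ := Submodule.orderIsoMapComap e
  refine ⟨s.map ⟨φ, fun h => (apply_covBy_apply_iff φ).2 h⟩, ?_, ?_, hlen⟩
  · simp [hhead]
  · simp [hlast]

theorem hasLength_two_of_exact {U S : Type*} [AddCommGroup U] [AddCommGroup S] [Module R U]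
    [Module R S] [IsSimpleModule R U] [IsSimpleModule R S] {ι : U →ₗ[R] M} {π : M →ₗ[R] S}
    (hι : Function.Injective ι) (hπ : Function.Surjective π) (hex : Function.Exact ι π) :
    HasLength (ModuleCat.of R M) 2 := by
  refine hasLength_two (bot_covBy_iff.2 (isAtom_range_of_injective hι)) (covBy_top_iff.2 ?_)
  rw [← LinearMap.exact_iff.1 hex]
  exact LinearMap.isCoatom_ker_of_surjective hπ

end Length

theorem isIndecomposable_of_isAtom {M : Type} [AddCommGroup M] [Module R M] {Z : Submodule R M}
    (hZ : IsAtom Z) (hess : ∀ X : Submodule R M, Disjoint X Z → X = ⊥) :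
    IsIndecomposable (ModuleCat.of R M) := by
  obtain ⟨z, -, hz⟩ := Submodule.ne_bot_iff _ |>.1 hZ.1
  refine ⟨nontrivial_of_ne z 0 hz, ?_⟩
  rintro ⟨N₁, N₂, h₁, h₂, hc⟩
  have hle : ∀ X : Submodule R M, X ≠ ⊥ → Z ≤ X := fun X hX =>
    hZ.not_disjoint_iff_le.1 fun hd => hX (hess X hd.symm)
  exact hZ.1 (le_bot_iff.1 (hc.disjoint.eq_bot ▸ le_inf (hle _ h₁) (hle _ h₂)))

theorem exists_isNonsplitExtension_of_nontrivial_ext1 (S U : ModuleCat.{0} R)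
    (h : Nontrivial (ext1 k R S U)) :
    ∃ (E : ModuleCat.{0} R) (ι : U →ₗ[R] E) (π : E →ₗ[R] S), IsNonsplitExtension ι π := by
  let P := ProjectiveResolution.of S
  let K := P.complex.linearYonedaObj k U
  have hK : ¬ K.ExactAt 1 := fun hex => not_subsingleton (ext1 k R S U)
    (ModuleCat.isZero_iff_subsingleton.1
      (((HomologicalComplex.exactAt_iff_isZero_homology K 1).1 hex).of_iso (P.isoExt 1 U)))
  rw [HomologicalComplex.exactAt_iff' K 0 1 2 (by simp) (by simp),
    ShortComplex.moduleCat_exact_iff] at hK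
  push Not at hK
  obtain ⟨f, hf, hnot⟩ := hK
  -- `f` is a cocycle `P₁ → U` that is not a coboundary; the extension is the pushout of the
  -- presentation `P₁ → P₀ → S` along `f`.
  change P.complex.X 1 ⟶ U at f
  change P.complex.d 2 1 ≫ f = 0 at hf
  have hdε : Function.Exact (P.complex.d 1 0).hom (P.π.f 0).hom :=
    (ShortComplex.ShortExact.moduleCat_exact_iff_function_exact _).1 P.exact₀
  have hε : Function.Surjective (P.π.f 0).hom := (ModuleCat.epi_iff_surjective _).1 inferInstance
  have hker : LinearMap.ker (P.complex.d 1 0).hom ≤ LinearMap.ker f.hom := by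
    have h1 := P.complex_exactAt_succ 0
    rw [HomologicalComplex.exactAt_iff' P.complex 2 1 0 (by simp) (by simp)] at h1
    have hrange : LinearMap.range (P.complex.d 2 1).hom = LinearMap.ker (P.complex.d 1 0).hom :=
      h1.moduleCat_range_eq_ker
    rw [← hrange]
    rintro _ ⟨y, rfl⟩
    exact congr($hf y)
  refine ⟨ModuleCat.of R (Pushout f.hom (P.complex.d 1 0).hom), Pushout.inl _ _,
    Pushout.descRight _ hdε.linearMap_comp_eq_zero, Pushout.inl_injective hker,
    Pushout.descRight_surjective _ hε, Pushout.exact_inl_descRight hdε, ?_⟩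
  rintro ⟨r, hr⟩
  exact hnot (ModuleCat.ofHom (r ∘ₗ Pushout.inr _ _))
    (ModuleCat.hom_ext (Pushout.comp_inr_comp_eq_of_comp_inl_eq_id hr))

namespace Pushout

variable {U E F S T : Type*} [AddCommGroup U] [AddCommGroup E] [AddCommGroup F]
  [AddCommGroup S] [AddCommGroup T] [Module R U] [Module R E] [Module R F] [Module R S]
  [Module R T] {ι₁ : U →ₗ[R] E} {π₁ : E →ₗ[R] S} {ι₂ : U →ₗ[R] F} {π₂ : F →ₗ[R] T}

theorem isAtom_range_inl_inf_range_inr [IsSimpleModule R U] (hι₁ : Function.Injective ι₁)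
    (hι₂ : Function.Injective ι₂) :
    IsAtom (LinearMap.range (inl ι₁ ι₂) ⊓ LinearMap.range (inr ι₁ ι₂)) := by
  rw [range_inl_inf_range_inr]
  exact isAtom_range_of_injective ((inl_injective_of_injective hι₂).comp hι₁)

theorem isCoatom_range_inl [IsSimpleModule R T] (h : Function.Exact ι₂ π₂)
    (hπ : Function.Surjective π₂) : IsCoatom (LinearMap.range (inl ι₁ ι₂)) := by
  rw [← LinearMap.exact_iff.1 (exact_inl_descRight h)]
  exact LinearMap.isCoatom_ker_of_surjective (descRight_surjective _ hπ)

theorem isCoatom_range_inr [IsSimpleModule R S] (h : Function.Exact ι₁ π₁)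
    (hπ : Function.Surjective π₁) : IsCoatom (LinearMap.range (inr ι₁ ι₂)) := by
  rw [← LinearMap.exact_iff.1 (exact_inr_descLeft h)]
  exact LinearMap.isCoatom_ker_of_surjective (descLeft_surjective _ hπ)

theorem not_range_inl_le_range_inr [Nontrivial S] (h : Function.Exact ι₁ π₁)
    (hπ : Function.Surjective π₁) :
    ¬ LinearMap.range (inl ι₁ ι₂) ≤ LinearMap.range (inr ι₁ ι₂) := by
  rw [← LinearMap.exact_iff.1 (exact_inr_descLeft h), LinearMap.range_le_ker_iff,
    descLeft_comp_inl]
  rintro rfl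
  obtain ⟨s, hs⟩ := exists_ne (0 : S)
  obtain ⟨e, rfl⟩ := hπ s
  exact hs rfl

theorem not_range_inr_le_range_inl [Nontrivial T] (h : Function.Exact ι₂ π₂)
    (hπ : Function.Surjective π₂) :
    ¬ LinearMap.range (inr ι₁ ι₂) ≤ LinearMap.range (inl ι₁ ι₂) := by
  rw [← LinearMap.exact_iff.1 (exact_inl_descRight h), LinearMap.range_le_ker_iff,
    descRight_comp_inr]
  rintro rfl
  obtain ⟨t, ht⟩ := exists_ne (0 : T)
  obtain ⟨f, rfl⟩ := hπ t
  exact ht rfl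

/-- `X` meets neither `E` nor `F` (both are essential over `U`), so it embeds in both `S` and `T`,
which are non-isomorphic simple modules. -/
theorem eq_bot_of_disjoint_range_inl_inf_range_inr [IsSimpleModule R S] [IsSimpleModule R T]
    (hST : IsEmpty (S ≃ₗ[R] T)) (h₁ : IsNonsplitExtension ι₁ π₁)
    (h₂ : IsNonsplitExtension ι₂ π₂) {X : Submodule R (Pushout ι₁ ι₂)}
    (hX : Disjoint X (LinearMap.range (inl ι₁ ι₂) ⊓ LinearMap.range (inr ι₁ ι₂))) : X = ⊥ := by
  have hX₁ : Disjoint X (LinearMap.range (inl ι₁ ι₂)) :=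
    disjoint_range_of_disjoint_map (inl_injective_of_injective h₂.injective)
      (fun _ => h₁.eq_bot_of_disjoint_range)
      (by rwa [← LinearMap.range_comp, ← range_inl_inf_range_inr])
  have hX₂ : Disjoint X (LinearMap.range (inr ι₁ ι₂)) :=
    disjoint_range_of_disjoint_map (inr_injective_of_injective h₁.injective)
      (fun _ => h₂.eq_bot_of_disjoint_range)
      (by rwa [← LinearMap.range_comp, ← inl_comp, ← range_inl_inf_range_inr])
  rw [← LinearMap.exact_iff.1 (exact_inl_descRight h₂.exact)] at hX₁
  rw [← LinearMap.exact_iff.1 (exact_inr_descLeft h₁.exact)] at hX₂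
  by_contra hne
  exact hST.false <|
    (LinearEquiv.ofBijective _ (bijective_domRestrict_of_disjoint_ker hne hX₂)).symm.trans
      (LinearEquiv.ofBijective _ (bijective_domRestrict_of_disjoint_ker hne hX₁))

end Pushout

theorem stmt7_general (k R : Type) [Field k] [Ring R] [Algebra k R]
    (S T U : ModuleCat.{0} R) [IsSimpleModule R S] [IsSimpleModule R T] [IsSimpleModule R U]
    (hST : IsEmpty (S ≃ₗ[R] T))
    (hSU : Nontrivial (ext1 k R S U)) (hTU : Nontrivial (ext1 k R T U)) :
    ∃ M : ModuleCat.{0} R, HasLength M 3 ∧ IsIndecomposable M ∧ ¬ IsUniserialModule M ∧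
      ∃ N N' : Submodule R M, N ≠ N' ∧
        HasLength (ModuleCat.of R ↥N) 2 ∧ HasLength (ModuleCat.of R ↥N') 2 := by
  obtain ⟨E, ι₁, π₁, h₁⟩ := exists_isNonsplitExtension_of_nontrivial_ext1 S U hSU
  obtain ⟨F, ι₂, π₂, h₂⟩ := exists_isNonsplitExtension_of_nontrivial_ext1 T U hTU
  have := IsSimpleModule.nontrivial R S
  have := IsSimpleModule.nontrivial R T
  have hNN' := Pushout.not_range_inl_le_range_inr (ι₂ := ι₂) h₁.exact h₁.surjective
  have hN'N := Pushout.not_range_inr_le_range_inl (ι₁ := ι₁) h₂.exact h₂.surjective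
  have hsocle := Pushout.isAtom_range_inl_inf_range_inr h₁.injective h₂.injective
  refine ⟨ModuleCat.of R (Pushout ι₁ ι₂), ?_, ?_, fun h => (h _ _).elim hNN' hN'N,
    _, _, fun h => hNN' h.le, ?_, ?_⟩
  · exact hasLength_three_of_isCoatom hsocle (Pushout.isCoatom_range_inl h₂.exact h₂.surjective)
      (Pushout.isCoatom_range_inr h₁.exact h₁.surjective) fun h => hNN' h.le
  · exact isIndecomposable_of_isAtom hsocle fun _ =>
      Pushout.eq_bot_of_disjoint_range_inl_inf_range_inr hST h₁ h₂
  · exact (hasLength_two_of_exact h₁.injective h₁.surjective h₁.exact).of_linearEquiv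
      (LinearEquiv.ofInjective _ (Pushout.inl_injective_of_injective h₂.injective))
  · exact (hasLength_two_of_exact h₂.injective h₂.surjective h₂.exact).of_linearEquiv
      (LinearEquiv.ofInjective _ (Pushout.inr_injective_of_injective h₁.injective))

theorem stmt7 (k R : Type) [Field k] [IsAlgClosed k] [Ring R] [Algebra k R]
    (S T U : ModuleCat.{0} R) [IsSimpleModule R S] [IsSimpleModule R T] [IsSimpleModule R U]
    (hST : IsEmpty (S ≃ₗ[R] T))
    (horthST : ∀ f : S ⟶ T, f = 0) (horthTS : ∀ f : T ⟶ S, f = 0)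
    (horthSU : ∀ f : S ⟶ U, f = 0) (horthUS : ∀ f : U ⟶ S, f = 0)
    (horthTU : ∀ f : T ⟶ U, f = 0) (horthUT : ∀ f : U ⟶ T, f = 0)
    (hS : EndIsScalar k S) (hT : EndIsScalar k T) (hU : EndIsScalar k U)
    (hSU : Nontrivial (ext1 k R S U)) (hTU : Nontrivial (ext1 k R T U)) :
    ∃ M : ModuleCat.{0} R, HasLength M 3 ∧ IsIndecomposable M ∧ ¬ IsUniserialModule M ∧
      ∃ N N' : Submodule R M, N ≠ N' ∧
        HasLength (ModuleCat.of R ↥N) 2 ∧ HasLength (ModuleCat.of R ↥N') 2 :=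
  stmt7_general k R S T U hST hSU hTU
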